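/- Let A be an alphabet with at least two letters, a ∈ A, B = A \ {a}, r ≥ 1, and k ≥ 1. Let W = B ∪ (B · Count(a^r, 0) · B), and let CountPS(a^r, k) denote the set of words v with |v|_{a^r} = k which have a^r both as a prefix and as a suffix. Then CountPS(a^r, k) = ⋃_{j=1}^{k} ⋃ { a^{k₁} W a^{k₂} W ⋯ W a^{k_j} : k₁,…,k_j ≥ r, k₁+⋯+k_j = k + (r-1)j }. -/

import Mathlib

/-- Number of occurrences of `w` as a contiguous subword (factor) of `v`. -/
def countOcc {α : Type*} [DecidableEq α] (w v : List α) : ℕ :=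
  ((List.range (v.length + 1)).filter (fun i => decide (w <+: v.drop i))).length

/-- `Count w k`: words containing exactly `k` occurrences of `w` as a factor. -/
def Count {α : Type*} [DecidableEq α] (w : List α) (k : ℕ) : Language α :=
  {v | countOcc w v = k}

/-- `CountPS w k`: words with exactly `k` occurrences of `w` as a factor,
having `w` both as a prefix and as a suffix. -/
def CountPS {α : Type*} [DecidableEq α] (w : List α) (k : ℕ) : Language α :=
  {v | countOcc w v = k ∧ w <+: v ∧ w <:+ v}

/-- The language of single letters distinct from `a` (the buffers). -/
def buffer {α : Type*} (a : α) : Language α := {l | ∃ b : α, b ≠ a ∧ l = [b]}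

/-- The wedge language `W = B ⊔ B·Count(aʳ,0)·B`. -/
def wedge {α : Type*} [DecidableEq α] (a : α) (r : ℕ) : Language α :=
  buffer a ⊔ buffer a * Count (List.replicate r a) 0 * buffer a

/-- `altLang a W [k₁,…,k_j]` is the language `a^{k₁} W a^{k₂} W ⋯ W a^{k_j}`. -/
def altLang {α : Type*} (a : α) (W : Language α) : List ℕ → Language α
  | [] => 1
  | [k] => {List.replicate k a}
  | k :: ks => ({List.replicate k a} : Language α) * W * altLang a W ks

/-! Cut a word with prefix and suffix `aʳ` into its leading block `aᵐ`, the stretch up to the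
next occurrence of `aʳ`, and the rest, which again has prefix and suffix `aʳ`. The stretch is a
wedge: a single letter `b ≠ a`, or `b u c` with `b, c ≠ a` and no occurrence of `aʳ` in `u`.
No occurrence of `aʳ` straddles a letter other than `a`, so occurrences are counted blockwise:
`aᵐ` contains `m + 1 - r` of them and a wedge none, which is the condition on `k₁ + ⋯ + k_j`. -/

open List

section Occurrences

variable {α : Type*} [DecidableEq α]

theorem countOcc_nil (w : List α) : countOcc w [] = if w = [] then 1 else 0 := by
  by_cases hw : w = [] <;> simp [countOcc, hw]

theorem countOcc_cons (w : List α) (c : α) (v : List α) :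
    countOcc w (c :: v) = (if w <+: c :: v then 1 else 0) + countOcc w v := by
  unfold countOcc
  rw [show (c :: v).length + 1 = (v.length + 1) + 1 by simp, range_succ_eq_map, filter_cons]
  by_cases h : w <+: c :: v <;> simp [h, filter_map, Function.comp_def, Nat.add_comm]

end Occurrences

section Replicate

variable {α : Type*} {a b : α} {r : ℕ}

theorem replicate_prefix_replicate_iff {m : ℕ} : replicate r a <+: replicate m a ↔ r ≤ m := by
  simp [prefix_replicate_iff]

theorem replicate_prefix_cons_of_prefix {t : List α} (h : replicate r a <+: t) :
    replicate r a <+: a :: t := by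
  obtain ⟨z, rfl⟩ := h
  refine ⟨a :: z, ?_⟩
  rw [← singleton_append, ← append_assoc, ← replicate_succ', replicate_succ, cons_append]

theorem replicate_prefix_append_cons_iff (hb : b ≠ a) (d z : List α) :
    replicate r a <+: d ++ b :: z ↔ replicate r a <+: d := by
  induction r generalizing d with
  | zero => simp
  | succ r ih =>
    cases d with
    | nil => simp [replicate_succ, Ne.symm hb]
    | cons c d => simp only [replicate_succ, cons_append, cons_prefix_cons, ih]

theorem replicate_suffix_append_cons_iff (hb : b ≠ a) (d z : List α) :
    replicate r a <:+ d ++ b :: z ↔ replicate r a <:+ z := by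
  rw [← reverse_prefix, ← reverse_prefix, reverse_replicate, reverse_append, reverse_cons,
    append_assoc, singleton_append, replicate_prefix_append_cons_iff hb]

theorem exists_eq_replicate_or_eq_replicate_append_cons (a : α) (v : List α) :
    ∃ m, v = replicate m a ∨ ∃ b ≠ a, ∃ t, v = replicate m a ++ b :: t := by
  induction v with
  | nil => exact ⟨0, .inl rfl⟩
  | cons c v ih =>
    by_cases hc : c = a
    · obtain ⟨m, hm⟩ := ih
      refine ⟨m + 1, ?_⟩
      subst hc
      simpa [replicate_succ] using hm
    · exact ⟨0, .inr ⟨c, hc, v, rfl⟩⟩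

end Replicate

section CountReplicate

variable {α : Type*} [DecidableEq α] {a b : α} {r : ℕ}

theorem countOcc_replicate_replicate (m : ℕ) :
    countOcc (replicate r a) (replicate m a) = m + 1 - r := by
  induction m with
  | zero => simp only [replicate_zero, countOcc_nil, replicate_eq_nil_iff]; split_ifs <;> omega
  | succ m ih =>
    rw [replicate_succ, countOcc_cons, ← replicate_succ, ih]
    simp only [replicate_prefix_replicate_iff]
    split_ifs <;> omega

theorem countOcc_replicate_nil (hr : 1 ≤ r) : countOcc (replicate r a) [] = 0 := by
  simpa [hr] using countOcc_replicate_replicate (a := a) (r := r) 0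

/-- An occurrence of `aʳ` cannot straddle a letter `b ≠ a`. -/
theorem countOcc_append_cons (hb : b ≠ a) (x y : List α) :
    countOcc (replicate r a) (x ++ b :: y)
      = countOcc (replicate r a) x + countOcc (replicate r a) y := by
  induction x with
  | nil =>
    have h := replicate_prefix_append_cons_iff (r := r) hb [] y
    by_cases hr : r = 0 <;> simp_all [countOcc_cons, countOcc_nil]
  | cons c x ih =>
    rw [cons_append, countOcc_cons, countOcc_cons, ← cons_append, ih, Nat.add_assoc]
    simp only [replicate_prefix_append_cons_iff hb]

end CountReplicate

section Wedge

variable {α : Type*} [DecidableEq α] {a b c : α} {r : ℕ}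

theorem mem_wedge_iff {w : List α} :
    w ∈ wedge a r ↔ (∃ b ≠ a, w = [b]) ∨
      ∃ b ≠ a, ∃ c ≠ a, ∃ u, countOcc (replicate r a) u = 0 ∧ w = b :: (u ++ [c]) := by
  change w ∈ buffer a + buffer a * Count (replicate r a) 0 * buffer a ↔ _
  simp only [Language.mem_add, Language.mem_mul]
  constructor
  · rintro (⟨b, hb, rfl⟩ | ⟨_, ⟨_, ⟨b, hb, rfl⟩, u, hu, rfl⟩, _, ⟨c, hc, rfl⟩, rfl⟩)
    · exact .inl ⟨b, hb, rfl⟩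
    · exact .inr ⟨b, hb, c, hc, u, hu, rfl⟩
  · rintro (⟨b, hb, rfl⟩ | ⟨b, hb, c, hc, u, hu, rfl⟩)
    · exact .inl ⟨b, hb, rfl⟩
    · exact .inr ⟨[b] ++ u, ⟨[b], ⟨b, hb, rfl⟩, u, hu, rfl⟩, [c], ⟨c, hc, rfl⟩, rfl⟩

theorem countOcc_append_append_of_mem_wedge {w : List α} (hw : w ∈ wedge a r) (x y : List α) :
    countOcc (replicate r a) (x ++ w ++ y)
      = countOcc (replicate r a) x + countOcc (replicate r a) y := by
  rcases mem_wedge_iff.mp hw with ⟨b, hb, rfl⟩ | ⟨b, hb, c, hc, u, hu, rfl⟩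
  · simpa using countOcc_append_cons hb x y
  · rw [show x ++ b :: (u ++ [c]) ++ y = x ++ b :: (u ++ c :: y) by simp,
      countOcc_append_cons hb, countOcc_append_cons hc, hu, Nat.zero_add]

theorem cons_cons_mem_wedge (hr : 1 ≤ r) {u t : List α} (hu : b :: u ∈ wedge a r)
    (ht : replicate r a <+: t) (hc : ¬ replicate r a <+: c :: (u ++ t)) :
    b :: c :: u ∈ wedge a r := by
  rcases mem_wedge_iff.mp hu with ⟨b, hb, h⟩ | ⟨b, hb, c', hc', u', hu', h⟩
  · obtain ⟨rfl, rfl⟩ := cons_eq_cons.mp h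
    have hca : c ≠ a := by
      rintro rfl
      exact hc (replicate_prefix_cons_of_prefix ht)
    exact mem_wedge_iff.mpr (.inr ⟨b, hb, c, hca, [], countOcc_replicate_nil hr, rfl⟩)
  · obtain ⟨rfl, rfl⟩ := cons_eq_cons.mp h
    refine mem_wedge_iff.mpr (.inr ⟨b, hb, c', hc', c :: u', ?_, rfl⟩)
    rw [countOcc_cons, hu', if_neg fun h ↦ hc (h.trans (by simp))]

/-- Cut `t` just before its first occurrence of `aʳ`. -/
theorem exists_cons_mem_wedge_of_infix (hr : 1 ≤ r) (hb : b ≠ a) {t : List α}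
    (ht : replicate r a <:+: t) :
    ∃ u t', t = u ++ t' ∧ b :: u ∈ wedge a r ∧ replicate r a <+: t' := by
  induction t with
  | nil => simp [infix_nil] at ht; omega
  | cons c t ih =>
    by_cases hpre : replicate r a <+: c :: t
    · exact ⟨[], c :: t, rfl, mem_wedge_iff.mpr (.inl ⟨b, hb, rfl⟩), hpre⟩
    · obtain ⟨u, t', rfl, hu, ht'⟩ := ih ((infix_cons_iff.mp ht).resolve_left hpre)
      exact ⟨c :: u, t', rfl, cons_cons_mem_wedge hr hu ht' hpre, ht'⟩

end Wedge

section AltLang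

variable {α : Type*} {a : α} {W : Language α}

theorem mem_altLang_cons {m : ℕ} {ks : List ℕ} (hks : ks ≠ []) {v : List α} :
    v ∈ altLang a W (m :: ks) ↔ ∃ w ∈ W, ∃ t ∈ altLang a W ks, v = replicate m a ++ w ++ t := by
  obtain ⟨k, ks, rfl⟩ := exists_cons_of_ne_nil hks
  simp only [altLang, Language.mem_mul]
  constructor
  · rintro ⟨_, ⟨_, rfl, w, hw, rfl⟩, t, ht, rfl⟩
    exact ⟨w, hw, t, ht, rfl⟩
  · rintro ⟨w, hw, t, ht, rfl⟩
    exact ⟨_, ⟨_, rfl, w, hw, rfl⟩, t, ht, rfl⟩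

end AltLang

section Main

variable {α : Type*} [DecidableEq α] {a : α} {r : ℕ}

theorem countOcc_add_eq_sum_and_affixes_of_mem_altLang (hr : 1 ≤ r) {ks : List ℕ}
    (hks : ks ≠ []) (hge : ∀ x ∈ ks, r ≤ x) {v : List α}
    (hv : v ∈ altLang a (wedge a r) ks) :
    countOcc (replicate r a) v + (r - 1) * ks.length = ks.sum ∧
      replicate r a <+: v ∧ replicate r a <:+ v := by
  induction ks generalizing v with
  | nil => exact absurd rfl hks
  | cons m ks ih =>
    have hm : r ≤ m := hge m mem_cons_self
    rcases eq_or_ne ks [] with rfl | hks'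
    · obtain rfl : v = replicate m a := hv
      refine ⟨?_, replicate_prefix_replicate_iff.mpr hm, ?_⟩
      · rw [countOcc_replicate_replicate]; simp; omega
      · exact suffix_replicate_iff.mpr ⟨by simpa using hm, by simp⟩
    obtain ⟨w, hw, t, ht, rfl⟩ := (mem_altLang_cons hks').mp hv
    obtain ⟨hcount, -, hsuf⟩ := ih hks' (fun x hx ↦ hge x (mem_cons_of_mem m hx)) ht
    refine ⟨?_, ?_, hsuf.trans (suffix_append _ _)⟩
    · rw [countOcc_append_append_of_mem_wedge hw, countOcc_replicate_replicate, length_cons,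
        sum_cons, ← hcount]
      have : (r - 1) * (ks.length + 1) = (r - 1) * ks.length + (r - 1) := by ring
      omega
    · exact (replicate_prefix_replicate_iff.mpr hm).trans
        ((prefix_append _ _).trans (prefix_append _ _))

theorem exists_mem_altLang_of_prefix_of_suffix (hr : 1 ≤ r) {v : List α}
    (hpre : replicate r a <+: v) (hsuf : replicate r a <:+ v) :
    ∃ ks ≠ [], (∀ x ∈ ks, r ≤ x) ∧ v ∈ altLang a (wedge a r) ks := by
  induction hn : v.length using Nat.strong_induction_on generalizing v with
  | _ n ih =>
    obtain ⟨m, rfl | ⟨b, hb, t, rfl⟩⟩ := exists_eq_replicate_or_eq_replicate_append_cons a v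
    · exact ⟨[m], cons_ne_nil _ _, by simpa [replicate_prefix_replicate_iff] using hpre, rfl⟩
    have hm : r ≤ m := by
      rwa [replicate_prefix_append_cons_iff hb, replicate_prefix_replicate_iff] at hpre
    have ht : replicate r a <:+ t := (replicate_suffix_append_cons_iff hb _ _).mp hsuf
    obtain ⟨u, t', rfl, hu, hpre'⟩ := exists_cons_mem_wedge_of_infix hr hb ht.isInfix
    have hsuf' : replicate r a <:+ t' :=
      suffix_of_suffix_length_le ht (suffix_append u t') hpre'.length_le
    obtain ⟨ks, hks, hge, ht'⟩ := ih t'.length (by simp [← hn]; omega) hpre' hsuf' rfl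
    refine ⟨m :: ks, cons_ne_nil _ _, ?_, (mem_altLang_cons hks).mpr ⟨b :: u, hu, t', ht', by simp⟩⟩
    simpa [hm] using hge

end Main

theorem stmt8_general {α : Type*} [DecidableEq α] (a : α)
    (r k : ℕ) (hr : 1 ≤ r) :
    CountPS (List.replicate r a) k
      = ⨆ ks ∈ {ks : List ℕ | 1 ≤ ks.length ∧ ks.length ≤ k ∧ (∀ x ∈ ks, r ≤ x) ∧
            ks.sum = k + (r - 1) * ks.length},
          altLang a (wedge a r) ks := by
  ext v
  simp only [CountPS, Language.mem_iSup, Set.mem_ofPred_eq]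
  constructor
  · rintro ⟨rfl, hpre, hsuf⟩
    obtain ⟨ks, hks, hge, hv⟩ := exists_mem_altLang_of_prefix_of_suffix hr hpre hsuf
    have hsum := (countOcc_add_eq_sum_and_affixes_of_mem_altLang hr hks hge hv).1
    have hbound : r * ks.length ≤ ks.sum := by simpa [mul_comm] using card_nsmul_le_sum ks r hge
    refine ⟨ks, ⟨length_pos_iff.mpr hks, ?_, hge, hsum.symm⟩, hv⟩
    have : (r - 1) * ks.length + ks.length = r * ks.length := by
      rw [← Nat.succ_mul, Nat.succ_eq_add_one, Nat.sub_add_cancel hr]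
    omega
  · rintro ⟨ks, ⟨hks, -, hge, hsum⟩, hv⟩
    obtain ⟨hcount, hpre, hsuf⟩ := countOcc_add_eq_sum_and_affixes_of_mem_altLang hr
      (length_pos_iff.mp hks) hge hv
    exact ⟨by omega, hpre, hsuf⟩

theorem stmt8 {α : Type*} [DecidableEq α] (a : α) (hA : ∃ b : α, b ≠ a)
    (r k : ℕ) (hr : 1 ≤ r) (hk : 1 ≤ k) :
    CountPS (List.replicate r a) k
      = ⨆ ks ∈ {ks : List ℕ | 1 ≤ ks.length ∧ ks.length ≤ k ∧ (∀ x ∈ ks, r ≤ x) ∧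
            ks.sum = k + (r - 1) * ks.length},
          altLang a (wedge a r) ks :=
  stmt8_general a r k hr
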